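/- arXiv:1608.06520 — 3 statements merged into one kernel-verified Lean document; each statement's English description precedes it below -/
import Mathlib

section
/- Let N ≥ 1, let f_1, …, f_N : ℝ → ℝ be Lebesgue-integrable functions with f_j(θ) ≥ 0 for all θ, let s_1, …, s_N ∈ ℤ be integer shifts, and let u ≥ 0 be a real number such that ∑_{j=1}^N f_j(θ − s_j) ≤ u for almost every θ ∈ ℝ. Let g_j be the unit-interval average of f_j, i.e., g_j(θ) = ∫_{⌊θ⌋}^{⌊θ⌋+1} f_j(ν) dν. Then ∑_{j=1}^N g_j(θ − s_j) ≤ u for every θ ∈ ℝ. -/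
/-!
Because the shifts are integers, the unit interval containing `θ - s j` is the translate by `s j`
of the unit interval `[⌊θ⌋, ⌊θ⌋ + 1]` containing `θ`. Hence `∑ j, g j (θ - s j)` is the integral
over that single unit interval of `∑ j, f j (· - s j)`, a function bounded by `u` almost everywhere.
-/

open MeasureTheory intervalIntegral

theorem integral_floor_sub_intCast_eq (F : ℝ → ℝ) (θ : ℝ) (k : ℤ) :
    ∫ ν in (⌊θ - k⌋ : ℝ)..((⌊θ - k⌋ : ℝ) + 1), F ν
      = ∫ t in (⌊θ⌋ : ℝ)..((⌊θ⌋ : ℝ) + 1), F (t - k) := by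
  rw [Int.floor_sub_intCast, intervalIntegral.integral_comp_sub_right F (k : ℝ)]
  push_cast
  ring_nf

theorem integral_unit_interval_le_of_ae_le {F : ℝ → ℝ} {a u : ℝ}
    (hF : IntervalIntegrable F volume a (a + 1)) (hle : ∀ᵐ t ∂volume, F t ≤ u) :
    ∫ t in a..(a + 1), F t ≤ u := by
  calc ∫ t in a..(a + 1), F t ≤ ∫ _ in a..(a + 1), u :=
        integral_mono_ae (by linarith) hF intervalIntegrable_const hle
    _ = u := by simp

theorem stmt_4_general (N : ℕ) (f : Fin N → ℝ → ℝ)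
    (hint : ∀ j, Integrable (f j))
    (s : Fin N → ℤ) (u : ℝ)
    (hcap : ∀ᵐ θ : ℝ ∂volume, ∑ j, f j (θ - (s j : ℝ)) ≤ u)
    (g : Fin N → ℝ → ℝ)
    (hg : ∀ j, ∀ θ : ℝ, g j θ = ∫ ν in (⌊θ⌋ : ℝ)..((⌊θ⌋ : ℝ) + 1), f j ν) :
    ∀ θ : ℝ, ∑ j, g j (θ - (s j : ℝ)) ≤ u := by
  intro θ
  have hshift : ∀ j, Integrable (fun t => f j (t - s j)) := fun j => (hint j).comp_sub_right _
  calc ∑ j, g j (θ - s j)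
      = ∑ j, ∫ t in (⌊θ⌋ : ℝ)..((⌊θ⌋ : ℝ) + 1), f j (t - s j) := by
        simp only [hg, integral_floor_sub_intCast_eq]
    _ = ∫ t in (⌊θ⌋ : ℝ)..((⌊θ⌋ : ℝ) + 1), ∑ j, f j (t - s j) :=
        (integral_finsetSum fun j _ => (hshift j).intervalIntegrable).symm
    _ ≤ u := integral_unit_interval_le_of_ae_le
        (integrable_finsetSum _ fun j _ => hshift j).intervalIntegrable hcap

/-- Unit-interval averaging preserves capacity constraints with integer shifts:
if `∑_j f_j(θ − s_j) ≤ u` holds almost everywhere, then the unit-interval averages `g_j`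
satisfy `∑_j g_j(θ − s_j) ≤ u` everywhere. -/
theorem stmt_4 (N : ℕ) (hN : 1 ≤ N) (f : Fin N → ℝ → ℝ)
    (hint : ∀ j, Integrable (f j)) (hpos : ∀ j, ∀ θ : ℝ, 0 ≤ f j θ)
    (s : Fin N → ℤ) (u : ℝ) (hu : 0 ≤ u)
    (hcap : ∀ᵐ θ : ℝ ∂volume, ∑ j, f j (θ - (s j : ℝ)) ≤ u)
    (g : Fin N → ℝ → ℝ)
    (hg : ∀ j, ∀ θ : ℝ, g j θ = ∫ ν in (⌊θ⌋ : ℝ)..((⌊θ⌋ : ℝ) + 1), f j ν) :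
    ∀ θ : ℝ, ∑ j, g j (θ - (s j : ℝ)) ≤ u :=
  stmt_4_general N f hint s u hcap g hg
end

section
/- Let t* ∈ ℝ, A > 0, and let {R_i}_{i∈I} be a finite family of axis-parallel rectangles R_i = [a_i, b_i] × [0, h_i] in the plane such that for every i: a_i ≤ t* ≤ b_i, 0 ≤ h_i ≤ 1, and (b_i − a_i)·h_i ≤ A. Let w = max_i (b_i − t*) (with w = 0 if I is empty). Then the two-dimensional Lebesgue measure of (⋃_{i∈I} R_i) ∩ ([t*, ∞) × ℝ) is at most A·(log₂(max(w/A, 1)) + 2). -/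
open MeasureTheory Set

/-- Geometric covering lemma: boxes `[a_i, b_i] × [0, h_i]` all crossing the vertical line
at `t*`, with heights at most `1` and areas at most `A`, cover to the right of `t*`
an area of at most `A·(log₂(max(w/A, 1)) + 2)`, where `w` bounds `max_i (b_i − t*)`
(with `w = 0` allowed when the family is empty). -/
theorem stmt_6 {ι : Type*} (s : Finset ι) (tstar A : ℝ) (hA : 0 < A)
    (a b h : ι → ℝ)
    (hline : ∀ i ∈ s, a i ≤ tstar ∧ tstar ≤ b i)
    (hh : ∀ i ∈ s, 0 ≤ h i ∧ h i ≤ 1)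
    (harea : ∀ i ∈ s, (b i - a i) * h i ≤ A)
    (w : ℝ) (hw0 : 0 ≤ w) (hw : ∀ i ∈ s, b i - tstar ≤ w) :
    volume ((⋃ i ∈ s, Icc (a i) (b i) ×ˢ Icc (0 : ℝ) (h i)) ∩ (Ici tstar ×ˢ (univ : Set ℝ)))
      ≤ ENNReal.ofReal (A * (Real.logb 2 (max (w / A) 1) + 2)) := by
  classical
  set r : ℝ := max (w / A) 1 with hr
  have hr1 : (1:ℝ) ≤ r := le_max_right _ _
  have hrpos : (0:ℝ) < r := lt_of_lt_of_le one_pos hr1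
  have hlogb0 : 0 ≤ Real.logb 2 r := Real.logb_nonneg one_lt_two hr1
  set N : ℕ := ⌈Real.logb 2 r⌉₊ with hN
  have hwA : w ≤ A * 2 ^ N := by
    have h1 : Real.logb 2 r ≤ (N : ℝ) := Nat.le_ceil _
    have h2 : r ≤ (2:ℝ) ^ (N:ℝ) := by
      calc r = (2:ℝ) ^ Real.logb 2 r := (Real.rpow_logb two_pos (by norm_num) hrpos).symm
        _ ≤ (2:ℝ) ^ (N:ℝ) := Real.rpow_le_rpow_of_exponent_le one_le_two h1
    rw [Real.rpow_natCast] at h2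
    have h3 : w / A ≤ r := le_max_left _ _
    calc w = (w / A) * A := by field_simp
      _ ≤ (2:ℝ)^N * A := by nlinarith
      _ = A * 2 ^ N := by ring
  set L : ℕ → ℝ := fun ℓ => if ℓ = 0 then tstar else tstar + A * 2 ^ (ℓ - 1) with hL
  set R : ℕ → ℝ := fun ℓ => tstar + A * 2 ^ ℓ with hR
  set H : ℕ → ℝ := fun ℓ => if ℓ = 0 then (1:ℝ) else 1 / 2 ^ (ℓ - 1) with hH
  have key : (⋃ i ∈ s, Icc (a i) (b i) ×ˢ Icc (0:ℝ) (h i)) ∩ (Ici tstar ×ˢ (univ : Set ℝ))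
      ⊆ ⋃ ℓ ∈ Finset.range (N+1), Icc (L ℓ) (R ℓ) ×ˢ Icc (0:ℝ) (H ℓ) := by
    rintro ⟨x, y⟩ ⟨hx1, hx2⟩
    simp only [mem_iUnion, mem_prod, mem_Icc, exists_prop] at hx1 ⊢
    obtain ⟨i, hi, ⟨hax, hxb⟩, hy0, hyh⟩ := hx1
    have htx : tstar ≤ x := hx2.1
    have hhi := hh i hi
    by_cases hcase : x ≤ tstar + A
    · exact ⟨0, by simp, ⟨by simp [hL, htx], by simpa [hR] using hcase⟩,
        hy0, by simpa [hH] using hyh.trans hhi.2⟩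
    · push_neg at hcase
      have hex : ∃ ℓ, x ≤ tstar + A * 2 ^ ℓ := by
        refine ⟨N, ?_⟩
        have := hw i hi
        linarith [hxb, hwA]
      set ℓ := Nat.find hex with hℓ
      have hspec : x ≤ tstar + A * 2 ^ ℓ := Nat.find_spec hex
      have hℓ0 : ℓ ≠ 0 := by
        intro h0
        rw [h0] at hspec
        simp at hspec
        linarith
      have hmin : tstar + A * 2 ^ (ℓ - 1) < x := by
        by_contra hc
        push_neg at hc
        exact Nat.find_min hex (by omega) hc
      have hℓN : ℓ ≤ N := Nat.find_min' hex (by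
        have := hw i hi
        linarith [hxb, hwA])
      have hpow : (0:ℝ) < 2 ^ (ℓ - 1) := by positivity
      have hxa : x - tstar ≤ b i - a i := by
        have := (hline i hi).1
        linarith
      have hArea : h i * (x - tstar) ≤ A := by
        have h1 : h i * (x - tstar) ≤ h i * (b i - a i) := by nlinarith [hhi.1]
        have h2 := harea i hi
        nlinarith
      have hy2 : y ≤ 1 / 2 ^ (ℓ - 1) := by
        rw [le_div_iff₀ hpow]
        have hxt : A * 2 ^ (ℓ - 1) < x - tstar := by linarith
        nlinarith [hhi.1]
      exact ⟨ℓ, Finset.mem_range.mpr (by omega), ⟨by simp [hL, hℓ0, hmin.le], by simpa [hR] using hspec⟩,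
        hy0, by simpa [hH, hℓ0] using hy2⟩
  have hstrip : ∀ ℓ, volume (Icc (L ℓ) (R ℓ) ×ˢ Icc (0:ℝ) (H ℓ)) ≤ ENNReal.ofReal A := by
    intro ℓ
    rw [Measure.volume_eq_prod, Measure.prod_prod, Real.volume_Icc, Real.volume_Icc]
    rcases Nat.eq_zero_or_pos ℓ with h0 | hpos
    · subst h0
      simp only [hL, hR, hH, if_pos rfl]
      rw [← ENNReal.ofReal_mul (by linarith)]
      apply ENNReal.ofReal_le_ofReal
      ring_nf
      simp
    · obtain ⟨m, rfl⟩ : ∃ m, ℓ = m + 1 := ⟨ℓ - 1, by omega⟩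
      simp only [hL, hR, hH, if_neg (Nat.succ_ne_zero m), Nat.add_sub_cancel]
      have h2m : (0:ℝ) < 2 ^ m := by positivity
      have e1 : tstar + A * 2 ^ (m + 1) - (tstar + A * 2 ^ m) = A * 2 ^ m := by
        rw [pow_succ]; ring
      rw [e1, ← ENNReal.ofReal_mul (by positivity)]
      apply ENNReal.ofReal_le_ofReal
      rw [show A * 2 ^ m * (1 / 2 ^ m - 0) = A * (2 ^ m / 2 ^ m) by ring,
        div_self (ne_of_gt h2m), mul_one]
  calc volume ((⋃ i ∈ s, Icc (a i) (b i) ×ˢ Icc (0:ℝ) (h i)) ∩ (Ici tstar ×ˢ (univ : Set ℝ)))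
      ≤ volume (⋃ ℓ ∈ Finset.range (N+1), Icc (L ℓ) (R ℓ) ×ˢ Icc (0:ℝ) (H ℓ)) :=
        measure_mono key
    _ ≤ ∑ ℓ ∈ Finset.range (N+1), volume (Icc (L ℓ) (R ℓ) ×ˢ Icc (0:ℝ) (H ℓ)) :=
        measure_biUnion_finset_le _ _
    _ ≤ ∑ ℓ ∈ Finset.range (N+1), ENNReal.ofReal A :=
        Finset.sum_le_sum fun ℓ _ => hstrip ℓ
    _ = (N+1 : ℕ) * ENNReal.ofReal A := by
        rw [Finset.sum_const, Finset.card_range, nsmul_eq_mul]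
    _ ≤ ENNReal.ofReal (A * (Real.logb 2 r + 2)) := by
        have hceil : (N : ℝ) < Real.logb 2 r + 1 := Nat.ceil_lt_add_one hlogb0
        have hcast : ((N+1 : ℕ) : ENNReal) = ENNReal.ofReal ((N+1 : ℕ) : ℝ) := by
          rw [ENNReal.ofReal_natCast]
        rw [hcast, ← ENNReal.ofReal_mul (by positivity)]
        apply ENNReal.ofReal_le_ofReal
        push_cast
        nlinarith
end

section
/- Let k ≥ 1 be an integer, let t_1, …, t_k ∈ ℝ, let T ≥ 1 and A > 0 be real numbers, and let {R_i}_{i∈I} be a finite family of axis-parallel rectangles R_i = [a_i, b_i] × [0, h_i] in the plane such that for every i: 0 ≤ h_i ≤ 1, b_i − a_i ≤ T, (b_i − a_i)·h_i ≤ A, and the base interval [a_i, b_i] contains at least one of the points t_1, …, t_k. Then the two-dimensional Lebesgue measure of ⋃_{i∈I} R_i is at most 2k·A·(log₂(max(T/A, 1)) + 2). -/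
/-!
All boxes whose base contains a fixed witness `t` lie under the hyperbola `y · |x - t| ≤ A`,
cut off at height `1` and at distance `A · 2^M > T` from `t`. This region is covered by the box
`[t - A, t + A] × [0, 1]` and, for each `m < M`, by the two boxes at distance between `A · 2^m`
and `A · 2^(m+1)` from `t` of height `2^(-m)`: each of these `M + 1` layers has area `2A`, and
`M ≤ log₂(max(T/A, 1)) + 1`.
-/

open MeasureTheory Set
open scoped ENNReal

lemma volume_Icc_prod_Icc (a b c d : ℝ) :
    volume (Icc a b ×ˢ Icc c d) = ENNReal.ofReal (b - a) * ENNReal.ofReal (d - c) := by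
  rw [Measure.volume_eq_prod, Measure.prod_prod, Real.volume_Icc, Real.volume_Icc]

lemma lt_mul_two_pow_floor_logb_add_one (T : ℝ) {A : ℝ} (hA : 0 < A) :
    T < A * 2 ^ (⌊Real.logb 2 (max (T / A) 1)⌋₊ + 1) := by
  set x := max (T / A) 1
  have hx : 0 < x := one_pos.trans_le (le_max_right _ _)
  have hx_lt : x < 2 ^ (⌊Real.logb 2 x⌋₊ + 1) := by
    calc x = 2 ^ Real.logb 2 x := (Real.rpow_logb two_pos (by norm_num) hx).symm
      _ < 2 ^ ((⌊Real.logb 2 x⌋₊ + 1 : ℕ) : ℝ) :=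
        Real.rpow_lt_rpow_of_exponent_lt one_lt_two (by exact_mod_cast Nat.lt_floor_add_one _)
      _ = 2 ^ (⌊Real.logb 2 x⌋₊ + 1) := Real.rpow_natCast _ _
  rw [← div_lt_iff₀' hA]
  exact (le_max_left _ _).trans_lt hx_lt

section Staircase

variable (t A : ℝ)

def dyadicShell (m : ℕ) : Set (ℝ × ℝ) :=
  (Icc (t - A * 2 ^ (m + 1)) (t - A * 2 ^ m) ∪ Icc (t + A * 2 ^ m) (t + A * 2 ^ (m + 1))) ×ˢ
    Icc 0 (2 ^ m)⁻¹

def staircase (M : ℕ) : Set (ℝ × ℝ) :=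
  Icc (t - A) (t + A) ×ˢ Icc 0 1 ∪ ⋃ m ∈ Finset.range M, dyadicShell t A m

variable {t A}

lemma volume_dyadicShell_le (hA : 0 ≤ A) (m : ℕ) :
    volume (dyadicShell t A m) ≤ ENNReal.ofReal (2 * A) := by
  have half : ∀ c d : ℝ, d - c = A * 2 ^ m →
      volume (Icc c d ×ˢ Icc (0 : ℝ) (2 ^ m)⁻¹) = ENNReal.ofReal A := by
    intro c d hcd
    rw [volume_Icc_prod_Icc, hcd, sub_zero, ← ENNReal.ofReal_mul (by positivity)]
    field_simp
  calc volume (dyadicShell t A m)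
      ≤ volume (Icc (t - A * 2 ^ (m + 1)) (t - A * 2 ^ m) ×ˢ Icc (0 : ℝ) (2 ^ m)⁻¹)
        + volume (Icc (t + A * 2 ^ m) (t + A * 2 ^ (m + 1)) ×ˢ Icc (0 : ℝ) (2 ^ m)⁻¹) := by
        rw [dyadicShell, union_prod]
        exact measure_union_le _ _
    _ = ENNReal.ofReal (2 * A) := by
        rw [half _ _ (by ring), half _ _ (by ring), ← ENNReal.ofReal_add hA hA, two_mul]

lemma volume_staircase_le (hA : 0 ≤ A) (M : ℕ) :
    volume (staircase t A M) ≤ ENNReal.ofReal (2 * (M + 1) * A) := by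
  have central : volume (Icc (t - A) (t + A) ×ˢ Icc (0 : ℝ) 1) = ENNReal.ofReal (2 * A) := by
    rw [volume_Icc_prod_Icc, sub_zero, ENNReal.ofReal_one, mul_one]
    ring_nf
  calc volume (staircase t A M)
      ≤ ENNReal.ofReal (2 * A) + ∑ m ∈ Finset.range M, volume (dyadicShell t A m) := by
        rw [← central]
        exact (measure_union_le _ _).trans (add_le_add_right (measure_biUnion_finset_le _ _) _)
    _ ≤ ENNReal.ofReal (2 * A) + ∑ _m ∈ Finset.range M, ENNReal.ofReal (2 * A) := by
        gcongr with m
        exact volume_dyadicShell_le hA m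
    _ = ENNReal.ofReal (2 * (M + 1) * A) := by
        rw [← ENNReal.ofReal_sum_of_nonneg (fun _ _ => by positivity),
          ← ENNReal.ofReal_add (by positivity) (by positivity)]
        simp only [Finset.sum_const, Finset.card_range, nsmul_eq_mul]
        ring_nf

lemma mk_mem_staircase (hA : 0 < A) {M : ℕ} {x y : ℝ} (hx : |x - t| < A * 2 ^ M)
    (hy₀ : 0 ≤ y) (hy₁ : y ≤ 1) (hxy : |x - t| * y ≤ A) : (x, y) ∈ staircase t A M := by
  rcases le_or_gt |x - t| A with hnear | hfar
  · obtain ⟨h₁, h₂⟩ := abs_le.1 hnear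
    exact Or.inl ⟨⟨by linarith, by linarith⟩, hy₀, hy₁⟩
  obtain ⟨m, hm_le, hm_lt⟩ := exists_nat_pow_near (one_le_div hA |>.2 hfar.le) one_lt_two
  rw [le_div_iff₀ hA, mul_comm] at hm_le
  rw [div_lt_iff₀ hA, mul_comm] at hm_lt
  have hmM : m < M := by
    have : (2 : ℝ) ^ m < 2 ^ M := lt_of_mul_lt_mul_left (hm_le.trans_lt hx) hA.le
    exact (pow_lt_pow_iff_right₀ one_lt_two).1 this
  have hy : y ≤ (2 ^ m)⁻¹ := by
    have : A * (2 ^ m * y) ≤ A * 1 :=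
      calc A * (2 ^ m * y) = A * 2 ^ m * y := by ring
        _ ≤ |x - t| * y := mul_le_mul_of_nonneg_right hm_le hy₀
        _ ≤ A * 1 := by rwa [mul_one]
    rw [inv_eq_one_div, le_div_iff₀ (by positivity)]
    linarith [le_of_mul_le_mul_left this hA]
  refine Or.inr (mem_biUnion (Finset.mem_range.2 hmM) ⟨?_, hy₀, hy⟩)
  rcases abs_cases (x - t) with ⟨habs, _⟩ | ⟨habs, _⟩ <;> rw [habs] at hm_le hm_lt
  · exact Or.inr ⟨by linarith, by linarith⟩
  · exact Or.inl ⟨by linarith, by linarith⟩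

lemma Icc_prod_Icc_subset_staircase (hA : 0 < A) {M : ℕ} {a b h : ℝ} (ht : t ∈ Icc a b)
    (hwidth : b - a < A * 2 ^ M) (hh : h ≤ 1) (harea : (b - a) * h ≤ A) :
    Icc a b ×ˢ Icc 0 h ⊆ staircase t A M := by
  rintro ⟨x, y⟩ ⟨hx, hy₀, hy⟩
  have hdist : |x - t| ≤ b - a :=
    abs_sub_le_iff.2 ⟨by linarith [hx.2, ht.1], by linarith [hx.1, ht.2]⟩
  exact mk_mem_staircase hA (hdist.trans_lt hwidth) hy₀ (hy.trans hh)
    ((mul_le_mul hdist hy hy₀ (by linarith [ht.1, ht.2])).trans harea)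

end Staircase

theorem stmt_7_general {ι : Type*} (s : Finset ι) (k : ℕ) (t : Fin k → ℝ)
    (T A : ℝ) (hA : 0 < A)
    (a b h : ι → ℝ)
    (hh : ∀ i ∈ s, 0 ≤ h i ∧ h i ≤ 1)
    (hwidth : ∀ i ∈ s, b i - a i ≤ T)
    (harea : ∀ i ∈ s, (b i - a i) * h i ≤ A)
    (hwitness : ∀ i ∈ s, ∃ j : Fin k, a i ≤ t j ∧ t j ≤ b i) :
    volume (⋃ i ∈ s, Icc (a i) (b i) ×ˢ Icc (0 : ℝ) (h i))
      ≤ ENNReal.ofReal (2 * k * A * (Real.logb 2 (max (T / A) 1) + 2)) := by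
  set L := Real.logb 2 (max (T / A) 1)
  set M := ⌊L⌋₊ + 1
  have hcover :
      (⋃ i ∈ s, Icc (a i) (b i) ×ˢ Icc (0 : ℝ) (h i)) ⊆ ⋃ j, staircase (t j) A M := by
    refine iUnion₂_subset fun i hi => ?_
    obtain ⟨j, hj⟩ := hwitness i hi
    exact (Icc_prod_Icc_subset_staircase hA hj
      ((hwidth i hi).trans_lt (lt_mul_two_pow_floor_logb_add_one T hA)) (hh i hi).2
      (harea i hi)).trans (subset_iUnion (fun j => staircase (t j) A M) j)
  have hM : (M : ℝ) + 1 ≤ L + 2 := by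
    have := Nat.floor_le (Real.logb_nonneg one_lt_two (le_max_right (T / A) 1))
    push_cast [M]
    linarith
  calc volume (⋃ i ∈ s, Icc (a i) (b i) ×ˢ Icc (0 : ℝ) (h i))
      ≤ ∑ j, volume (staircase (t j) A M) :=
        (measure_mono hcover).trans (measure_iUnion_fintype_le _ _)
    _ ≤ ∑ _j : Fin k, ENNReal.ofReal (2 * (M + 1) * A) :=
        Finset.sum_le_sum fun j _ => volume_staircase_le hA.le M
    _ ≤ ENNReal.ofReal (2 * k * A * (L + 2)) := by
        rw [← ENNReal.ofReal_sum_of_nonneg (fun _ _ => by positivity)]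
        refine ENNReal.ofReal_le_ofReal ?_
        simp only [Finset.sum_const, Finset.card_univ, Fintype.card_fin, nsmul_eq_mul]
        have hkA : 0 ≤ 2 * (k : ℝ) * A := by positivity
        linarith [mul_le_mul_of_nonneg_left hM hkA]

/-- Geometric content of the `O(k log T)` bound: boxes of width at most `T`, height at most
`1`, area at most `A`, each of whose base intervals contains one of `k` witness points,
cover a total area of at most `2k·A·(log₂(max(T/A, 1)) + 2)`. -/
theorem stmt_7 {ι : Type*} (s : Finset ι) (k : ℕ) (hk : 1 ≤ k) (t : Fin k → ℝ)
    (T A : ℝ) (hT : 1 ≤ T) (hA : 0 < A)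
    (a b h : ι → ℝ)
    (hh : ∀ i ∈ s, 0 ≤ h i ∧ h i ≤ 1)
    (hwidth : ∀ i ∈ s, b i - a i ≤ T)
    (harea : ∀ i ∈ s, (b i - a i) * h i ≤ A)
    (hwitness : ∀ i ∈ s, ∃ j : Fin k, a i ≤ t j ∧ t j ≤ b i) :
    volume (⋃ i ∈ s, Icc (a i) (b i) ×ˢ Icc (0 : ℝ) (h i))
      ≤ ENNReal.ofReal (2 * k * A * (Real.logb 2 (max (T / A) 1) + 2)) :=
  stmt_7_general s k t T A hA a b h hh hwidth harea hwitness
end
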